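/- Let x⁰, x¹, x², … be a PPA sequence for min_{x∈Ω} q(x) with inf_{x∈Ω} q(x) > −∞, and let x̄ be an accumulation point of (x^k) which is a KKT point of min_{x∈Ω} q(x) at which the strict complementarity conditions hold. Then the whole sequence converges: lim_{k→∞} x^k = x̄. (Theorem 3.6.) -/

import Mathlib

open Matrix Filter Topology

/-- Euclidean norm of a finitely-indexed real vector. -/
noncomputable def vnorm {ι : Type*} [Fintype ι] (v : ι → ℝ) : ℝ :=
  Real.sqrt (v ⬝ᵥ v)

/-- Membership in the (possibly unbounded) box `Ω = {x | l ≤ x ≤ u}`,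
with extended-real bounds. -/
def inBox {n : ℕ} (l u : Fin n → EReal) (x : Fin n → ℝ) : Prop :=
  ∀ j, l j ≤ (x j : EReal) ∧ (x j : EReal) ≤ u j

/-- The quadratic objective `q(x) = ½ xᵀQx + rᵀx`. -/
noncomputable def qf {n : ℕ} (Q : Matrix (Fin n) (Fin n) ℝ) (r : Fin n → ℝ)
    (x : Fin n → ℝ) : ℝ :=
  (1 / 2) * (x ⬝ᵥ Q *ᵥ x) + r ⬝ᵥ x

/-- `xbar` is a KKT point of `min_{x∈Ω} q(x)` at which the strict complementarity
conditions hold: the gradient component is `> 0` at lower-active indices, `= 0` at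
free indices, and `< 0` at upper-active indices. -/
def kktStrict {n : ℕ} (l u : Fin n → EReal) (Q : Matrix (Fin n) (Fin n) ℝ)
    (r : Fin n → ℝ) (xbar : Fin n → ℝ) : Prop :=
  ∀ j, ((xbar j : EReal) = l j → 0 < (Q *ᵥ xbar + r) j) ∧
    (l j < (xbar j : EReal) ∧ (xbar j : EReal) < u j → (Q *ᵥ xbar + r) j = 0) ∧
    ((xbar j : EReal) = u j → (Q *ᵥ xbar + r) j < 0)

section auxlemmas
variable {n : ℕ}

lemma vd_nonneg (v : Fin n → ℝ) : 0 ≤ v ⬝ᵥ v :=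
  Finset.sum_nonneg fun _ _ => mul_self_nonneg _

lemma vnorm_nonneg (v : Fin n → ℝ) : 0 ≤ vnorm v := Real.sqrt_nonneg _

lemma vnorm_sq (v : Fin n → ℝ) : vnorm v ^ 2 = v ⬝ᵥ v :=
  Real.sq_sqrt (vd_nonneg v)

lemma abs_le_vnorm (v : Fin n → ℝ) (j : Fin n) : |v j| ≤ vnorm v := by
  rw [vnorm, ← Real.sqrt_sq_eq_abs]
  apply Real.sqrt_le_sqrt
  rw [sq]
  exact Finset.single_le_sum (f := fun i => v i * v i)
    (fun i _ => mul_self_nonneg _) (Finset.mem_univ j)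

lemma dot_le_vnorm_mul (v w : Fin n → ℝ) : v ⬝ᵥ w ≤ vnorm v * vnorm w := by
  have h := Real.sum_mul_le_sqrt_mul_sqrt Finset.univ v w
  simpa [vnorm, dotProduct, sq] using h

lemma vnorm_zero : vnorm (0 : Fin n → ℝ) = 0 := by
  simp [vnorm, dotProduct]

lemma abs_dot_le_vnorm_mul (v w : Fin n → ℝ) : |v ⬝ᵥ w| ≤ vnorm v * vnorm w := by
  rcases abs_cases (v ⬝ᵥ w) with ⟨h, _⟩ | ⟨h, _⟩
  · rw [h]; exact dot_le_vnorm_mul v w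
  · rw [h]
    have h2 : -(v ⬝ᵥ w) = (-v) ⬝ᵥ w := by rw [neg_dotProduct]
    rw [h2]
    have h3 : vnorm (-v) = vnorm v := by
      unfold vnorm
      rw [neg_dotProduct, dotProduct_neg, neg_neg]
    calc (-v) ⬝ᵥ w ≤ vnorm (-v) * vnorm w := dot_le_vnorm_mul _ _
      _ = vnorm v * vnorm w := by rw [h3]

lemma symm_dot {Q : Matrix (Fin n) (Fin n) ℝ} (hQ : Q.IsSymm) (v w : Fin n → ℝ) :
    v ⬝ᵥ Q *ᵥ w = w ⬝ᵥ Q *ᵥ v := by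
  rw [Matrix.dotProduct_mulVec, ← Matrix.mulVec_transpose, hQ.eq, dotProduct_comm]

lemma qf_expand {Q : Matrix (Fin n) (Fin n) ℝ} {r : Fin n → ℝ} (hQ : Q.IsSymm)
    (v w : Fin n → ℝ) :
    qf Q r w = qf Q r v + (Q *ᵥ v + r) ⬝ᵥ (w - v)
      + (1 / 2) * ((w - v) ⬝ᵥ Q *ᵥ (w - v)) := by
  have h1 : v ⬝ᵥ Q *ᵥ w = w ⬝ᵥ Q *ᵥ v := symm_dot hQ v w
  simp only [qf, Matrix.mulVec_sub, dotProduct_sub, sub_dotProduct,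
    add_dotProduct, dotProduct_add]
  rw [dotProduct_comm (Q *ᵥ v) w, dotProduct_comm (Q *ᵥ v) v, h1]
  ring

lemma continuous_quadform (M : Matrix (Fin n) (Fin n) ℝ) :
    Continuous (fun v : Fin n → ℝ => v ⬝ᵥ M *ᵥ v) := by
  unfold dotProduct Matrix.mulVec
  apply continuous_finset_sum
  intro i _
  exact (continuous_apply i).mul
    (continuous_finset_sum _ fun j _ => continuous_const.mul (continuous_apply j))

lemma continuous_dot : Continuous (fun v : Fin n → ℝ => v ⬝ᵥ v) := by
  unfold dotProduct
  exact continuous_finset_sum _ fun i _ => (continuous_apply i).mul (continuous_apply i)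

lemma exists_mu (hn : 1 ≤ n) (M : Matrix (Fin n) (Fin n) ℝ) (hM : M.PosDef) :
    ∃ μ : ℝ, 0 < μ ∧ ∀ v : Fin n → ℝ, μ * (v ⬝ᵥ v) ≤ v ⬝ᵥ M *ᵥ v := by
  classical
  set S : Set (Fin n → ℝ) := {v | v ⬝ᵥ v = 1} with hS
  have hclosed : IsClosed S := isClosed_eq continuous_dot continuous_const
  have hbdd : Bornology.IsBounded S := by
    apply (Metric.isBounded_closedBall (x := (0 : Fin n → ℝ)) (r := 1)).subset
    intro v hv
    have hv' : v ⬝ᵥ v = 1 := hv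
    simp only [Metric.mem_closedBall]
    rw [dist_pi_le_iff zero_le_one]
    intro i
    rw [Real.dist_eq]
    simp only [Pi.zero_apply, sub_zero]
    rw [abs_le_one_iff_mul_self_le_one]
    calc v i * v i ≤ v ⬝ᵥ v :=
          Finset.single_le_sum (f := fun j => v j * v j)
            (fun j _ => mul_self_nonneg _) (Finset.mem_univ i)
      _ = 1 := hv'
  have hcompact : IsCompact S := Metric.isCompact_of_isClosed_isBounded hclosed hbdd
  have hne : S.Nonempty := by
    refine ⟨Pi.single ⟨0, hn⟩ 1, ?_⟩
    simp [hS, dotProduct, Pi.single_apply]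
  obtain ⟨z₀, hz₀S, hz₀min⟩ :=
    hcompact.exists_isMinOn hne (continuous_quadform M).continuousOn
  have hz₀1 : z₀ ⬝ᵥ z₀ = 1 := hz₀S
  have hz₀ne : z₀ ≠ 0 := by
    intro h; rw [h] at hz₀1; simp at hz₀1
  refine ⟨z₀ ⬝ᵥ M *ᵥ z₀, ?_, ?_⟩
  · have := hM.dotProduct_mulVec_pos hz₀ne
    simpa using this
  · intro v
    by_cases hv : v = 0
    · subst hv; simp
    · have hvv : 0 < v ⬝ᵥ v := by
        rcases lt_or_eq_of_le (Finset.sum_nonneg (fun i _ => mul_self_nonneg (v i))) with h | h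
        · exact h
        · exfalso; apply hv; funext i
          have := (Finset.sum_eq_zero_iff_of_nonneg
            (fun i _ => mul_self_nonneg (v i))).1 h.symm i (Finset.mem_univ i)
          exact mul_self_eq_zero.1 this
      set c : ℝ := Real.sqrt (v ⬝ᵥ v) with hc
      have hcpos : 0 < c := Real.sqrt_pos.2 hvv
      have hc2 : c ^ 2 = v ⬝ᵥ v := Real.sq_sqrt hvv.le
      have hwS : (c⁻¹ • v) ∈ S := by
        simp only [hS, Set.mem_setOf_eq, smul_dotProduct, dotProduct_smul,
          smul_eq_mul]
        field_simp
        linarith [hc2]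
      have hmin := hz₀min hwS
      have hq : (c⁻¹ • v) ⬝ᵥ M *ᵥ (c⁻¹ • v) = c⁻¹ * (c⁻¹ * (v ⬝ᵥ M *ᵥ v)) := by
        rw [Matrix.mulVec_smul, smul_dotProduct, dotProduct_smul]
        simp [smul_eq_mul]
      simp only [Set.mem_setOf_eq] at hmin
      rw [hq] at hmin
      have h2 : (z₀ ⬝ᵥ M *ᵥ z₀) * c ^ 2 ≤ v ⬝ᵥ M *ᵥ v := by
        rw [sq]
        have := mul_le_mul_of_nonneg_left hmin (by positivity : (0:ℝ) ≤ c * c)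
        calc (z₀ ⬝ᵥ M *ᵥ z₀) * (c * c) = (c * c) * (z₀ ⬝ᵥ M *ᵥ z₀) := by ring
          _ ≤ (c * c) * (c⁻¹ * (c⁻¹ * (v ⬝ᵥ M *ᵥ v))) := this
          _ = v ⬝ᵥ M *ᵥ v := by field_simp
      rw [← hc2]; linarith [h2]

lemma ereal_slack_up {a : ℝ} {u : EReal} (h : (a : EReal) < u) :
    ∃ t : ℝ, 0 < t ∧ ∀ s : ℝ, 0 ≤ s → s ≤ t → ((a + s : ℝ) : EReal) ≤ u := by
  induction u using EReal.rec with
  | bot => exact absurd h (by simp)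
  | coe b =>
    have hab : a < b := EReal.coe_lt_coe_iff.1 h
    exact ⟨b - a, sub_pos.2 hab, fun s h0 hs => EReal.coe_le_coe_iff.2 (by linarith)⟩
  | top => exact ⟨1, one_pos, fun s _ _ => le_top⟩

lemma ereal_slack_down {a : ℝ} {l : EReal} (h : l < (a : EReal)) :
    ∃ t : ℝ, 0 < t ∧ ∀ s : ℝ, 0 ≤ s → s ≤ t → l ≤ ((a - s : ℝ) : EReal) := by
  induction l using EReal.rec with
  | bot => exact ⟨1, one_pos, fun s _ _ => bot_le⟩
  | coe b =>
    have hab : b < a := EReal.coe_lt_coe_iff.1 h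
    exact ⟨a - b, sub_pos.2 hab, fun s h0 hs => EReal.coe_le_coe_iff.2 (by linarith)⟩
  | top => exact absurd h (by simp)

variable {Q : Matrix (Fin n) (Fin n) ℝ} {r : Fin n → ℝ}

lemma perturb (hQ : Q.IsSymm) (γ : ℝ) (w y : Fin n → ℝ) (j : Fin n) (t : ℝ) :
    qf Q r (w + Pi.single j t) + γ / 2 * vnorm (w + Pi.single j t - y) ^ 2
      = qf Q r w + γ / 2 * vnorm (w - y) ^ 2
        + t * ((Q *ᵥ w + r) j + γ * (w j - y j)) + t ^ 2 * ((Q j j + γ) / 2) := by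
  have h1 : w + Pi.single j t - w = Pi.single j t := by abel
  have hqf := qf_expand (r := r) hQ w (w + Pi.single j t)
  rw [h1] at hqf
  have h2 : w + Pi.single j t - y = (w - y) + Pi.single j t := by abel
  rw [hqf, h2, vnorm_sq, vnorm_sq]
  simp only [dotProduct_add, add_dotProduct, dotProduct_single,
    single_dotProduct, Matrix.mulVec_single, Pi.add_apply, Pi.sub_apply,
    Pi.single_eq_same, Pi.smul_apply, op_smul_eq_mul, Matrix.col_apply]
  ring

lemma diag_pos {γ : ℝ} (hpd : (Q + γ • (1 : Matrix (Fin n) (Fin n) ℝ)).PosDef) (j : Fin n) :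
    0 < Q j j + γ := by
  have hne : (Pi.single j 1 : Fin n → ℝ) ≠ 0 := by
    intro h
    have := congrFun h j
    simp at this
  have h := hpd.dotProduct_mulVec_pos hne
  simpa [Matrix.add_mulVec, Matrix.smul_mulVec, Matrix.one_mulVec,
    dotProduct_add, single_dotProduct, dotProduct_smul,
    Pi.single_eq_same, star_trivial] using h

lemma step_kkt (l u : Fin n → EReal) (hQ : Q.IsSymm) {γ : ℝ}
    (hpd : (Q + γ • (1 : Matrix (Fin n) (Fin n) ℝ)).PosDef)
    (w y : Fin n → ℝ) (hw : inBox l u w)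
    (hopt : ∀ z, inBox l u z → qf Q r w + γ / 2 * vnorm (w - y) ^ 2 ≤
      qf Q r z + γ / 2 * vnorm (z - y) ^ 2)
    (j : Fin n) :
    ((w j : EReal) < u j → 0 ≤ (Q *ᵥ w + r) j + γ * (w j - y j)) ∧
    (l j < (w j : EReal) → (Q *ᵥ w + r) j + γ * (w j - y j) ≤ 0) := by
  set G : ℝ := (Q *ᵥ w + r) j + γ * (w j - y j) with hG
  set c : ℝ := (Q j j + γ) / 2 with hc
  have hcpos : 0 < c := by
    have := diag_pos (γ := γ) hpd j
    simp only [hc]; linarith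
  clear_value G c
  have key : ∀ t : ℝ, inBox l u (w + Pi.single j t) → 0 ≤ t * G + t ^ 2 * c := by
    intro t hz
    have h := hopt _ hz
    have hp := perturb (r := r) hQ γ w y j t
    rw [← hG, ← hc] at hp
    rw [hp] at h
    linarith
  constructor
  · intro hu
    by_contra hGneg
    push_neg at hGneg
    obtain ⟨t₀, ht₀, hslack⟩ := ereal_slack_up hu
    set t : ℝ := min t₀ (-G / (2 * c)) with ht
    have htpos : 0 < t := lt_min ht₀ (div_pos (neg_pos.2 hGneg) (by linarith))
    have hfeas : inBox l u (w + Pi.single j t) := by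
      intro j'
      by_cases hj : j' = j
      · subst hj
        have hv : ((w + Pi.single j' t : Fin n → ℝ)) j' = w j' + t := by simp
        rw [hv]
        constructor
        · exact le_trans (hw j').1 (EReal.coe_le_coe_iff.2 (by linarith))
        · exact hslack t htpos.le (min_le_left _ _)
      · have hv : ((w + Pi.single j t : Fin n → ℝ)) j' = w j' := by
          simp [Pi.single_eq_of_ne hj]
        rw [hv]; exact hw j'
    have h0 := key t hfeas
    have htle : t * (2 * c) ≤ -G := (le_div_iff₀ (by linarith)).1 (min_le_right _ _)
    have h3 := mul_le_mul_of_nonneg_left htle htpos.le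
    have h4 : t * G < 0 := mul_neg_of_pos_of_neg htpos hGneg
    nlinarith
  · intro hl
    by_contra hGpos
    push_neg at hGpos
    obtain ⟨t₀, ht₀, hslack⟩ := ereal_slack_down hl
    set s : ℝ := min t₀ (G / (2 * c)) with hs
    have hspos : 0 < s := lt_min ht₀ (by positivity)
    have hfeas : inBox l u (w + Pi.single j (-s)) := by
      intro j'
      by_cases hj : j' = j
      · subst hj
        have hv : ((w + Pi.single j' (-s) : Fin n → ℝ)) j' = w j' - s := by
          simp; ring
        rw [hv]
        constructor
        · exact hslack s hspos.le (min_le_left _ _)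
        · exact le_trans (EReal.coe_le_coe_iff.2 (by linarith)) (hw j').2
      · have hv : ((w + Pi.single j (-s) : Fin n → ℝ)) j' = w j' := by
          simp [Pi.single_eq_of_ne hj]
        rw [hv]; exact hw j'
    have h0 := key (-s) hfeas
    have hsle : s * (2 * c) ≤ G := (le_div_iff₀ (by linarith)).1 (min_le_right _ _)
    have h3 := mul_le_mul_of_nonneg_left hsle hspos.le
    have h4 : 0 < s * G := mul_pos hspos hGpos
    nlinarith

end auxlemmas

set_option maxHeartbeats 4000000 in
/-- Theorem 3.6: if a PPA sequence has an accumulation point `xbar` which is a KKT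
point at which the strict complementarity conditions hold, then the whole sequence
converges to `xbar`. -/
theorem ppa_converges_of_strict_complementarity {n : ℕ} (hn : 1 ≤ n)
    (l u : Fin n → EReal)
    (hl : ∀ j, l j ≠ ⊤) (hu : ∀ j, u j ≠ ⊥) (hlu : ∀ j, l j < u j)
    (Q : Matrix (Fin n) (Fin n) ℝ) (hQ : Q.IsSymm) (r : Fin n → ℝ)
    (γ : ℝ) (hγ : 0 < γ)
    (hpd : (Q + γ • (1 : Matrix (Fin n) (Fin n) ℝ)).PosDef)
    (hbdd : ∃ B : ℝ, ∀ z, inBox l u z → B ≤ qf Q r z)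
    (x : ℕ → Fin n → ℝ) (hmem : ∀ k, inBox l u (x k))
    (hppa : ∀ k, ∀ z, inBox l u z →
      qf Q r (x (k + 1)) + γ / 2 * vnorm (x (k + 1) - x k) ^ 2 ≤
        qf Q r z + γ / 2 * vnorm (z - x k) ^ 2)
    (xbar : Fin n → ℝ) (hxbar : inBox l u xbar)
    (hacc : ∃ φ : ℕ → ℕ, StrictMono φ ∧ Tendsto (fun i => x (φ i)) atTop (𝓝 xbar))
    (hkkt : kktStrict l u Q r xbar) :
    Tendsto x atTop (𝓝 xbar) := by
  classical
  obtain ⟨φ, hφmono, hφt⟩ := hacc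
  set g : Fin n → ℝ := Q *ᵥ xbar + r with hgdef
  obtain ⟨μ, hμ, hμle⟩ := exists_mu hn _ hpd
  -- quadratic form lower bound in split form
  have hquad : ∀ v : Fin n → ℝ, μ * (v ⬝ᵥ v) ≤ v ⬝ᵥ Q *ᵥ v + γ * (v ⬝ᵥ v) := by
    intro v
    have h := hμle v
    rw [Matrix.add_mulVec, Matrix.smul_mulVec, Matrix.one_mulVec,
      dotProduct_add, dotProduct_smul] at h
    simpa [smul_eq_mul] using h
  -- Stage 1 : q (x k) is antitone and ≥ q xbar
  have hdesc : ∀ k, qf Q r (x (k + 1)) ≤ qf Q r (x k) := by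
    intro k
    have h := hppa k (x k) (hmem k)
    rw [sub_self, vnorm_zero] at h
    have h1 : 0 ≤ γ / 2 * vnorm (x (k + 1) - x k) ^ 2 := by
      have := vnorm_nonneg (x (k + 1) - x k); positivity
    nlinarith
  have hanti : Antitone (fun k => qf Q r (x k)) :=
    antitone_nat_of_succ_le hdesc
  have hcont : Continuous (qf Q r) := by
    unfold qf
    apply Continuous.add
    · exact continuous_const.mul (continuous_quadform Q)
    · unfold dotProduct
      exact continuous_finset_sum _ fun i _ => continuous_const.mul (continuous_apply i)
  have hqlim : Tendsto (fun i => qf Q r (x (φ i))) atTop (𝓝 (qf Q r xbar)) :=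
    (hcont.tendsto xbar).comp hφt
  have hqge : ∀ k, qf Q r xbar ≤ qf Q r (x k) := by
    intro k
    apply le_of_tendsto hqlim
    filter_upwards [eventually_ge_atTop k] with i hi
    exact hanti (le_trans hi (hφmono.le_apply))
  -- trichotomy of indices
  have hcases : ∀ j, (l j < (xbar j : EReal) ∧ (xbar j : EReal) < u j) ∨
      ((xbar j : EReal) = l j) ∨ ((xbar j : EReal) = u j) := by
    intro j
    rcases lt_or_eq_of_le (hxbar j).1 with h1 | h1
    · rcases lt_or_eq_of_le (hxbar j).2 with h2 | h2
      · exact Or.inl ⟨h1, h2⟩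
      · exact Or.inr (Or.inr h2)
    · exact Or.inr (Or.inl h1.symm)
  -- KKT inner-product inequality
  have hgdot : ∀ z, inBox l u z → 0 ≤ g ⬝ᵥ (z - xbar) := by
    intro z hz
    apply Finset.sum_nonneg
    intro j _
    rcases hcases j with hf | hal | hau
    · have hgj : g j = 0 := (hkkt j).2.1 hf
      rw [hgj]; simp
    · have hgj : 0 < g j := (hkkt j).1 hal
      have hle : xbar j ≤ z j := by
        have := (hz j).1
        rw [← hal] at this
        exact EReal.coe_le_coe_iff.1 this
      have : (0:ℝ) ≤ z j - xbar j := by linarith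
      exact mul_nonneg hgj.le (by simpa using this)
    · have hgj : g j < 0 := (hkkt j).2.2 hau
      have hle : z j ≤ xbar j := by
        have := (hz j).2
        rw [← hau] at this
        exact EReal.coe_le_coe_iff.1 this
      have h0 : z j - xbar j ≤ 0 := by linarith
      have h1 : (z - xbar) j ≤ 0 := by simpa using h0
      nlinarith
  -- Stage 4 : contraction bound
  have hcontr : ∀ k, μ * vnorm (x (k + 1) - xbar) ≤ 2 * γ * vnorm (x k - xbar) := by
    intro k
    set w : Fin n → ℝ := x (k + 1) with hwdef
    set y : Fin n → ℝ := x k with hydef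
    set h : Fin n → ℝ := w - xbar with hhdef
    set e : Fin n → ℝ := y - xbar with hedef
    have a1 := hppa k xbar hxbar
    have hexp := qf_expand (r := r) hQ xbar w
    have hwy : w - y = h - e := by rw [hhdef, hedef]; abel
    have hxy : xbar - y = -e := by rw [hedef]; abel
    have hv1 : vnorm (w - y) ^ 2 = h ⬝ᵥ h - 2 * (h ⬝ᵥ e) + e ⬝ᵥ e := by
      rw [hwy, vnorm_sq]
      simp only [dotProduct_sub, sub_dotProduct]
      rw [dotProduct_comm e h]
      ring
    have hv2 : vnorm (xbar - y) ^ 2 = e ⬝ᵥ e := by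
      rw [hxy, vnorm_sq]
      simp only [dotProduct_neg, neg_dotProduct, neg_neg]
    have hexp' : qf Q r w = qf Q r xbar + g ⬝ᵥ h + (1/2) * (h ⬝ᵥ Q *ᵥ h) := by
      rw [hexp, hhdef, hgdef]
    have hgh : 0 ≤ g ⬝ᵥ h := by
      have := hgdot w (hmem (k + 1))
      rwa [← hhdef] at this
    have hq2 : μ * (h ⬝ᵥ h) ≤ h ⬝ᵥ Q *ᵥ h + γ * (h ⬝ᵥ h) := hquad h
    -- from a1:
    have key : μ * (h ⬝ᵥ h) ≤ 2 * γ * (h ⬝ᵥ e) := by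
      rw [hexp'] at a1
      rw [hv1, hv2] at a1
      nlinarith
    have hcs : h ⬝ᵥ e ≤ vnorm h * vnorm e := dot_le_vnorm_mul h e
    have hfin : μ * (vnorm h * vnorm h) ≤ 2 * γ * (vnorm h * vnorm e) := by
      have h1 : vnorm h * vnorm h = h ⬝ᵥ h := by rw [← sq, vnorm_sq]
      rw [h1]
      calc μ * (h ⬝ᵥ h) ≤ 2 * γ * (h ⬝ᵥ e) := key
        _ ≤ 2 * γ * (vnorm h * vnorm e) := by
            apply mul_le_mul_of_nonneg_left hcs (by linarith)
    rcases eq_or_lt_of_le (vnorm_nonneg h) with h0 | h0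
    · rw [← h0]
      have := vnorm_nonneg e
      nlinarith
    · have hle : (μ * vnorm h) * vnorm h ≤ (2 * γ * vnorm e) * vnorm h := by
        nlinarith [hfin]
      exact le_of_mul_le_mul_right hle h0
  -- contraction with constant κ
  set κ : ℝ := 2 * γ / μ with hκdef
  have hκ : 0 < κ := by rw [hκdef]; positivity
  have hcontr' : ∀ k, vnorm (x (k + 1) - xbar) ≤ κ * vnorm (x k - xbar) := by
    intro k
    have h := hcontr k
    have heq : κ * vnorm (x k - xbar) = (2 * γ * vnorm (x k - xbar)) / μ := by
      rw [hκdef]; ring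
    rw [heq, le_div_iff₀ hμ]
    nlinarith
  -- row norm bounds
  set rowB : Fin n → ℝ := fun j => vnorm (fun i => Q j i) with hrowdef
  have hrowB0 : ∀ j, 0 ≤ rowB j := fun j => vnorm_nonneg _
  have hrow : ∀ (v : Fin n → ℝ) (j : Fin n), |(Q *ᵥ v) j| ≤ rowB j * vnorm v := by
    intro v j
    exact abs_dot_le_vnorm_mul (fun i => Q j i) v
  -- margins for free indices
  set δlow : Fin n → ℝ := fun j => if l j = ⊥ then 1 else xbar j - (l j).toReal with hδlowdef
  set δup : Fin n → ℝ := fun j => if u j = ⊤ then 1 else (u j).toReal - xbar j with hδupdef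
  have hδlow_pos : ∀ j, l j < (xbar j : EReal) → 0 < δlow j := by
    intro j hj
    by_cases hb : l j = ⊥
    · simp [hδlowdef, hb]
    · have hcoe : ((l j).toReal : EReal) = l j := EReal.coe_toReal (hl j) hb
      rw [← hcoe] at hj
      have h2 := EReal.coe_lt_coe_iff.1 hj
      simp only [hδlowdef, hb, if_false]
      linarith
  have hδup_pos : ∀ j, (xbar j : EReal) < u j → 0 < δup j := by
    intro j hj
    by_cases hb : u j = ⊤
    · simp [hδupdef, hb]
    · have hcoe : ((u j).toReal : EReal) = u j := EReal.coe_toReal hb (hu j)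
      rw [← hcoe] at hj
      have h2 := EReal.coe_lt_coe_iff.1 hj
      simp only [hδupdef, hb, if_false]
      linarith
  have hδlow_lt : ∀ j, l j < (xbar j : EReal) → ∀ a : ℝ, xbar j - δlow j < a →
      l j < (a : EReal) := by
    intro j hj a ha
    by_cases hb : l j = ⊥
    · rw [hb]; exact EReal.bot_lt_coe a
    · have hcoe : ((l j).toReal : EReal) = l j := EReal.coe_toReal (hl j) hb
      rw [← hcoe]
      apply EReal.coe_lt_coe_iff.2
      simp only [hδlowdef, hb, if_false] at ha
      linarith
  have hδup_lt : ∀ j, (xbar j : EReal) < u j → ∀ a : ℝ, a < xbar j + δup j →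
      (a : EReal) < u j := by
    intro j hj a ha
    by_cases hb : u j = ⊤
    · rw [hb]; exact EReal.coe_lt_top a
    · have hcoe : ((u j).toReal : EReal) = u j := EReal.coe_toReal hb (hu j)
      rw [← hcoe]
      apply EReal.coe_lt_coe_iff.2
      simp only [hδupdef, hb, if_false] at ha
      linarith
  -- thresholds
  set thr : Fin n → ℝ := fun j =>
    if (xbar j : EReal) = l j ∨ (xbar j : EReal) = u j
    then |g j| / (rowB j * κ + γ * (κ + 1) + 1)
    else min (δlow j) (δup j) / (κ + 1) with hthrdef
  have hD : ∀ j, 0 < rowB j * κ + γ * (κ + 1) + 1 := by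
    intro j
    nlinarith [hrowB0 j, hκ, hγ]
  have hthr_pos : ∀ j, 0 < thr j := by
    intro j
    by_cases hact : (xbar j : EReal) = l j ∨ (xbar j : EReal) = u j
    · have habs : 0 < |g j| := by
        rcases hact with hal | hau
        · exact abs_pos.2 (ne_of_gt ((hkkt j).1 hal))
        · exact abs_pos.2 (ne_of_lt ((hkkt j).2.2 hau))
      simp only [hthrdef, if_pos hact]
      exact div_pos habs (hD j)
    · rcases hcases j with hf | hal | hau
      · simp only [hthrdef, if_neg hact]
        exact div_pos (lt_min (hδlow_pos j hf.1) (hδup_pos j hf.2)) (by linarith)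
      · exact absurd (Or.inl hal) hact
      · exact absurd (Or.inr hau) hact
  haveI : NeZero n := ⟨by omega⟩
  set ε : ℝ := Finset.univ.inf' Finset.univ_nonempty thr with hεdef
  have hεpos : 0 < ε := by
    rw [hεdef, Finset.lt_inf'_iff]
    exact fun j _ => hthr_pos j
  have hεle : ∀ j, ε ≤ thr j := fun j => Finset.inf'_le _ (Finset.mem_univ j)
  -- Stage 5 : identification
  have hident : ∀ k, vnorm (x k - xbar) ≤ ε →
      (∀ j, ((xbar j : EReal) = l j ∨ (xbar j : EReal) = u j) → x (k + 1) j = xbar j) ∧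
      (∀ j, l j < (xbar j : EReal) → (xbar j : EReal) < u j →
        (Q *ᵥ x (k + 1) + r) j + γ * (x (k + 1) j - x k j) = 0) := by
    intro k hk
    have hcb : vnorm (x (k + 1) - xbar) ≤ κ * ε :=
      le_trans (hcontr' k) (mul_le_mul_of_nonneg_left hk hκ.le)
    have hskkt := step_kkt (r := r) l u hQ hpd (x (k + 1)) (x k) (hmem (k + 1)) (hppa k)
    have habs1 : ∀ j, |(Q *ᵥ (x (k + 1) - xbar)) j| ≤ rowB j * (κ * ε) := by
      intro j
      exact le_trans (hrow _ j) (mul_le_mul_of_nonneg_left hcb (hrowB0 j))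
    have habs2 : ∀ j, |x (k + 1) j - xbar j| ≤ κ * ε := by
      intro j
      have := abs_le_vnorm (x (k + 1) - xbar) j
      simp only [Pi.sub_apply] at this
      exact le_trans this hcb
    have habs3 : ∀ j, |x k j - xbar j| ≤ ε := by
      intro j
      have := abs_le_vnorm (x k - xbar) j
      simp only [Pi.sub_apply] at this
      exact le_trans this hk
    have hGdec : ∀ j, (Q *ᵥ x (k + 1) + r) j + γ * (x (k + 1) j - x k j)
        = g j + (Q *ᵥ (x (k + 1) - xbar)) j
          + γ * ((x (k + 1) j - xbar j) - (x k j - xbar j)) := by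
      intro j
      have h0 : xbar + (x (k + 1) - xbar) = x (k + 1) := by abel
      have h1 : Q *ᵥ x (k + 1) = Q *ᵥ xbar + Q *ᵥ (x (k + 1) - xbar) := by
        rw [← Matrix.mulVec_add, h0]
      rw [hgdef]
      simp only [Pi.add_apply, h1]
      ring
    constructor
    · intro j hact
      rcases hact with hal | hau
      · have hgj : 0 < g j := (hkkt j).1 hal
        have hεj := hεle j
        have hthrj : thr j = g j / (rowB j * κ + γ * (κ + 1) + 1) := by
          simp only [hthrdef, if_pos (Or.inl hal : (xbar j : EReal) = l j ∨ (xbar j : EReal) = u j)]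
          rw [abs_of_pos hgj]
        have hεD : ε * (rowB j * κ + γ * (κ + 1) + 1) ≤ g j := by
          rw [hthrj] at hεj
          exact (le_div_iff₀ (hD j)).1 hεj
        have hGpos : 0 < (Q *ᵥ x (k + 1) + r) j + γ * (x (k + 1) j - x k j) := by
          rw [hGdec j]
          have h1 := abs_le.1 (habs1 j)
          have h2 := abs_le.1 (habs2 j)
          have h3 := abs_le.1 (habs3 j)
          nlinarith [hεpos, hκ, hγ, hrowB0 j]
        have hwl : l j = (x (k + 1) j : EReal) := by
          by_contra hne
          have hlt : l j < (x (k + 1) j : EReal) := lt_of_le_of_ne (hmem (k + 1) j).1 hne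
          have := (hskkt j).2 hlt
          linarith
        have hcc : (xbar j : EReal) = (x (k + 1) j : EReal) := hal.trans hwl
        exact (EReal.coe_eq_coe_iff.1 hcc).symm
      · have hgj : g j < 0 := (hkkt j).2.2 hau
        have hεj := hεle j
        have hthrj : thr j = -g j / (rowB j * κ + γ * (κ + 1) + 1) := by
          simp only [hthrdef, if_pos (Or.inr hau : (xbar j : EReal) = l j ∨ (xbar j : EReal) = u j)]
          rw [abs_of_neg hgj]
        have hεD : ε * (rowB j * κ + γ * (κ + 1) + 1) ≤ -g j := by
          rw [hthrj] at hεj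
          exact (le_div_iff₀ (hD j)).1 hεj
        have hGneg : (Q *ᵥ x (k + 1) + r) j + γ * (x (k + 1) j - x k j) < 0 := by
          rw [hGdec j]
          have h1 := abs_le.1 (habs1 j)
          have h2 := abs_le.1 (habs2 j)
          have h3 := abs_le.1 (habs3 j)
          nlinarith [hεpos, hκ, hγ, hrowB0 j]
        have hwu : (x (k + 1) j : EReal) = u j := by
          by_contra hne
          have hlt : (x (k + 1) j : EReal) < u j := lt_of_le_of_ne (hmem (k + 1) j).2 hne
          have := (hskkt j).1 hlt
          linarith
        have hcc : (x (k + 1) j : EReal) = (xbar j : EReal) := hwu.trans hau.symm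
        exact EReal.coe_eq_coe_iff.1 hcc
    · intro j hfl hfu
      have hnact : ¬((xbar j : EReal) = l j ∨ (xbar j : EReal) = u j) := by
        rintro (h | h)
        · rw [h] at hfl; exact lt_irrefl _ hfl
        · rw [h] at hfu; exact lt_irrefl _ hfu
      have hthrj : thr j = min (δlow j) (δup j) / (κ + 1) := by
        simp only [hthrdef, if_neg hnact]
      have hmin_pos : 0 < min (δlow j) (δup j) :=
        lt_min (hδlow_pos j hfl) (hδup_pos j hfu)
      have hκε_lt : κ * ε < min (δlow j) (δup j) := by
        have hεj := hεle j
        rw [hthrj] at hεj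
        have h2 : κ * ε ≤ κ * (min (δlow j) (δup j) / (κ + 1)) :=
          mul_le_mul_of_nonneg_left hεj hκ.le
        have h3 : κ * (min (δlow j) (δup j) / (κ + 1)) < min (δlow j) (δup j) := by
          rw [mul_div_assoc']
          rw [div_lt_iff₀ (by linarith : (0:ℝ) < κ + 1)]
          nlinarith
        linarith
      have h2 := abs_le.1 (habs2 j)
      have hlo : l j < (x (k + 1) j : EReal) := by
        apply hδlow_lt j hfl
        have : κ * ε < δlow j := lt_of_lt_of_le hκε_lt (min_le_left _ _)
        linarith
      have hhi : (x (k + 1) j : EReal) < u j := by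
        apply hδup_lt j hfu
        have : κ * ε < δup j := lt_of_lt_of_le hκε_lt (min_le_right _ _)
        linarith
      have ha := (hskkt j).1 hhi
      have hb := (hskkt j).2 hlo
      linarith
  -- Stage 6 : on the face, distance to xbar is non-increasing
  have hface : ∀ k,
      (∀ j, ((xbar j : EReal) = l j ∨ (xbar j : EReal) = u j) → x k j = xbar j) →
      (∀ j, ((xbar j : EReal) = l j ∨ (xbar j : EReal) = u j) → x (k + 1) j = xbar j) →
      (∀ j, l j < (xbar j : EReal) → (xbar j : EReal) < u j →
        (Q *ᵥ x (k + 1) + r) j + γ * (x (k + 1) j - x k j) = 0) →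
      vnorm (x (k + 1) - xbar) ≤ vnorm (x k - xbar) := by
    intro k hPk hPk1 hfree
    set d : Fin n → ℝ := x (k + 1) - xbar with hddef
    set e : Fin n → ℝ := x k - xbar with hedef
    have hexp := qf_expand (r := r) hQ xbar (x (k + 1))
    rw [← hgdef, ← hddef] at hexp
    have hgd : g ⬝ᵥ d = 0 := by
      apply Finset.sum_eq_zero
      intro j _
      rcases hcases j with hf | hal | hau
      · have hgj : g j = 0 := (hkkt j).2.1 hf
        rw [hgj, zero_mul]
      · have hd0 : d j = 0 := by
          rw [hddef]
          simp [Pi.sub_apply, hPk1 j (Or.inl hal)]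
        rw [hd0, mul_zero]
      · have hd0 : d j = 0 := by
          rw [hddef]
          simp [Pi.sub_apply, hPk1 j (Or.inr hau)]
        rw [hd0, mul_zero]
    have hS : 0 ≤ d ⬝ᵥ Q *ᵥ d := by
      have h := hqge (k + 1)
      rw [hexp, hgd] at h
      linarith
    have hstep : ∀ j, d j * (Q *ᵥ d) j = -γ * (d j * (d j - e j)) := by
      intro j
      rcases hcases j with hf | hal | hau
      · have hg0 : g j = 0 := (hkkt j).2.1 hf
        have hQd : (Q *ᵥ d) j = -γ * (d j - e j) := by
          have h0 : xbar + d = x (k + 1) := by rw [hddef]; abel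
          have h1 : (Q *ᵥ x (k + 1)) j = (Q *ᵥ xbar) j + (Q *ᵥ d) j := by
            rw [← h0, Matrix.mulVec_add]
            simp [Pi.add_apply]
          have h2 := hfree j hf.1 hf.2
          have h3 : (Q *ᵥ xbar) j + r j = 0 := by
            have : g j = (Q *ᵥ xbar) j + r j := by rw [hgdef]; simp
            rw [← this]; exact hg0
          have h4 : d j = x (k + 1) j - xbar j := by rw [hddef]; simp
          have h5 : e j = x k j - xbar j := by rw [hedef]; simp
          have h6 : (Q *ᵥ x (k + 1) + r) j = (Q *ᵥ x (k + 1)) j + r j := by simp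
          rw [h6, h1] at h2
          have h7 : x (k + 1) j - x k j = d j - e j := by rw [h4, h5]; ring
          rw [h7] at h2
          linarith
        rw [hQd]
        ring
      · have hd0 : d j = 0 := by
          rw [hddef]; simp [Pi.sub_apply, hPk1 j (Or.inl hal)]
        rw [hd0]; ring
      · have hd0 : d j = 0 := by
          rw [hddef]; simp [Pi.sub_apply, hPk1 j (Or.inr hau)]
        rw [hd0]; ring
    have hSe : d ⬝ᵥ Q *ᵥ d = -γ * (d ⬝ᵥ d) + γ * (d ⬝ᵥ e) := by
      calc d ⬝ᵥ Q *ᵥ d = ∑ j, d j * (Q *ᵥ d) j := rfl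
        _ = ∑ j, -γ * (d j * (d j - e j)) := Finset.sum_congr rfl fun j _ => hstep j
        _ = ∑ j, (-γ * (d j * d j) + γ * (d j * e j)) := by
            apply Finset.sum_congr rfl
            intro j _
            ring
        _ = -γ * (d ⬝ᵥ d) + γ * (d ⬝ᵥ e) := by
            rw [Finset.sum_add_distrib, ← Finset.mul_sum, ← Finset.mul_sum]
            rfl
    have hde : γ * (d ⬝ᵥ d) ≤ γ * (d ⬝ᵥ e) := by linarith
    have hcs : d ⬝ᵥ e ≤ vnorm d * vnorm e := dot_le_vnorm_mul d e
    have hdd : d ⬝ᵥ d = vnorm d ^ 2 := (vnorm_sq d).symm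
    rcases eq_or_lt_of_le (vnorm_nonneg d) with h0 | h0
    · rw [← h0]; exact vnorm_nonneg e
    · have h1 : γ * (vnorm d * vnorm d) ≤ γ * (vnorm d * vnorm e) := by
        nlinarith [hde, hcs, hdd]
      have h2 : vnorm d * vnorm d ≤ vnorm d * vnorm e := le_of_mul_le_mul_left h1 hγ
      exact le_of_mul_le_mul_left h2 h0
  -- Stage 7 : induction on the tail
  set κ' : ℝ := κ + 1 with hκ'def
  have hκ'1 : 1 ≤ κ' := by rw [hκ'def]; linarith
  have hκ'pos : 0 < κ' := by linarith
  have hεκ' : ε / κ' ≤ ε := div_le_self hεpos.le hκ'1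
  have hind : ∀ K, vnorm (x K - xbar) ≤ ε / κ' → ∀ m,
      (∀ j, ((xbar j : EReal) = l j ∨ (xbar j : EReal) = u j) → x (K + 1 + m) j = xbar j) ∧
      vnorm (x (K + 1 + m) - xbar) ≤ κ' * vnorm (x K - xbar) := by
    intro K hK
    have hKε : vnorm (x K - xbar) ≤ ε := le_trans hK hεκ'
    intro m
    induction m with
    | zero =>
      constructor
      · exact (hident K hKε).1
      · calc vnorm (x (K + 1 + 0) - xbar) = vnorm (x (K + 1) - xbar) := rfl
          _ ≤ κ * vnorm (x K - xbar) := hcontr' K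
          _ ≤ κ' * vnorm (x K - xbar) := by
              apply mul_le_mul_of_nonneg_right _ (vnorm_nonneg _)
              rw [hκ'def]; linarith
    | succ m ih =>
      obtain ⟨ihP, ihB⟩ := ih
      have hbound : vnorm (x (K + 1 + m) - xbar) ≤ ε := by
        calc vnorm (x (K + 1 + m) - xbar) ≤ κ' * vnorm (x K - xbar) := ihB
          _ ≤ κ' * (ε / κ') := mul_le_mul_of_nonneg_left hK hκ'pos.le
          _ = ε := by field_simp
      have hid := hident (K + 1 + m) hbound
      have hidx : K + 1 + (m + 1) = (K + 1 + m) + 1 := by omega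
      constructor
      · rw [hidx]; exact hid.1
      · rw [hidx]
        calc vnorm (x ((K + 1 + m) + 1) - xbar) ≤ vnorm (x (K + 1 + m) - xbar) :=
              hface (K + 1 + m) ihP hid.1 hid.2
          _ ≤ κ' * vnorm (x K - xbar) := ihB
  -- conclusion
  have hvt : Tendsto (fun i => vnorm (x (φ i) - xbar)) atTop (𝓝 0) := by
    have hc : Continuous (fun v : Fin n → ℝ => vnorm (v - xbar)) := by
      unfold vnorm
      exact (continuous_dot.comp (continuous_id.sub continuous_const)).sqrt
    have h := (hc.tendsto xbar).comp hφt
    have h0 : vnorm (xbar - xbar) = 0 := by rw [sub_self, vnorm_zero]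
    rw [h0] at h
    exact h
  rw [Metric.tendsto_atTop]
  intro δ hδ
  have hρ : 0 < min (ε / κ') (δ / (2 * κ')) :=
    lt_min (div_pos hεpos hκ'pos) (div_pos (by linarith) (by linarith))
  obtain ⟨i, hi⟩ := (hvt.eventually (gt_mem_nhds hρ)).exists
  refine ⟨φ i + 1, fun k hk => ?_⟩
  have hm : k = φ i + 1 + (k - (φ i + 1)) := by omega
  have hb := (hind (φ i) (le_trans hi.le (min_le_left _ _)) (k - (φ i + 1))).2
  rw [← hm] at hb
  have hvk : vnorm (x k - xbar) < δ := by
    have h2 : κ' * vnorm (x (φ i) - xbar) ≤ κ' * (δ / (2 * κ')) :=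
      mul_le_mul_of_nonneg_left (le_trans hi.le (min_le_right _ _)) hκ'pos.le
    have h3 : κ' * (δ / (2 * κ')) = δ / 2 := by
      field_simp
    calc vnorm (x k - xbar) ≤ κ' * vnorm (x (φ i) - xbar) := hb
      _ ≤ δ / 2 := by rw [← h3]; exact h2
      _ < δ := by linarith
  have hdist : dist (x k) xbar ≤ vnorm (x k - xbar) := by
    rw [dist_pi_le_iff (vnorm_nonneg _)]
    intro j
    rw [Real.dist_eq]
    have := abs_le_vnorm (x k - xbar) j
    simpa [Pi.sub_apply] using this
  linarith [hdist, hvk]
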